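/- Let (A,+) be a cancellative semigroup and X, Y ⊆ A such that X is non-empty and the subsemigroup ⟨Y⟩ generated by Y is commutative. Then |X + Y| ≥ min(γ(Y), |X| + |Y| − 1). -/

import Mathlib

/-!
Translating `Y` by the inverse of a unit `y₀ ∈ Y` reduces the bound to the case where `Y` contains
the identity `e` and every `y ∈ Y \ {e}` has `m ≤ ord y`; this case goes by induction on `|Y|`.
If `X + Y` is stable under adding each `y ∈ Y`, it contains a translate of `⟨y⟩` for some `y ≠ e`,
so `|X + Y| ≥ m`. Otherwise some `z = w + y` with `w ∈ X + Y`, `y ∈ Y` lies outside `X + Y`, so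
`Ỹ_z` is nonempty and misses `e`. Passing from `Y` to `Y \ Ỹ_z` loses at least `|Ỹ_z|` elements of
`X + Y`: by cancellation each `y ∈ Ỹ_z` has its own `w ∈ X + Y` with `w + y = z`, and by
commutativity none of these lies in `X + (Y \ Ỹ_z)`.
-/

open scoped Pointwise Classical
open AddSubsemigroup

namespace CD

variable {A : Type*} [AddSemigroup A]

/-- An element `z` is cancellable if both translation maps are injective. -/
def Cancellable (z : A) : Prop :=
  Function.Injective (fun x : A => x + z) ∧ Function.Injective (fun x : A => z + x)

/-- `e` is a two-sided identity of the semigroup. -/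
def IsIdentity (e : A) : Prop := ∀ x : A, x + e = x ∧ e + x = x

/-- `u` is a unit: there is a two-sided identity and a two-sided inverse of `u`. -/
def IsUnitElem (u : A) : Prop := ∃ e v : A, IsIdentity e ∧ u + v = e ∧ v + u = e

/-- The inverse of a unit (junk value otherwise). -/
noncomputable def neg (u : A) : A :=
  if h : IsUnitElem u then h.choose_spec.choose else u

/-- `ord a` is the cardinality of the subsemigroup generated by `a`. -/
noncomputable def ord (a : A) : ℕ∞ := (closure {a} : Set A).encard

/-- The units of `A` lying in `W`. -/
def unitsIn (W : Set A) : Set A := {w ∈ W | IsUnitElem w}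

/-- A set is commutative if its elements pairwise commute. -/
def CommOn (S : Set A) : Prop := ∀ a ∈ S, ∀ b ∈ S, a + b = b + a

/-- The Cauchy-Davenport constant of a set. -/
noncomputable def gamma (X : Set A) : ℕ∞ :=
  if X.encard ≤ 1 then X.encard
  else ⨆ x₀ ∈ unitsIn X, ⨅ x ∈ {x ∈ X | x ≠ x₀}, ord (x + neg x₀)

/-- The sumset `X 0 + X 1 + ⋯ + X n` of a tuple of sets. -/
def sumsetTup : (n : ℕ) → (Fin (n + 1) → Set A) → Set A
  | 0, X => X 0
  | n + 1, X => sumsetTup n (fun i => X i.castSucc) + X (Fin.last (n + 1))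

/-- The sum `x 0 + x 1 + ⋯ + x n` of a tuple of elements. -/
def sumTup : (n : ℕ) → (Fin (n + 1) → A) → A
  | 0, x => x 0
  | n + 1, x => sumTup n (fun i => x i.castSucc) + x (Fin.last (n + 1))

/-- `nfold n a` is the `(n+1)`-fold sum `a + a + ⋯ + a`. -/
def nfold : ℕ → A → A
  | 0, a => a
  | n + 1, a => nfold n a + a

/-- `⟨⟨W⟩⟩`, the subsemigroup generated by `W` together with the inverses of its units. -/
noncomputable def dclosure (W : Set A) : Set A :=
  (closure (W ∪ neg '' unitsIn W) : Set A)

/-- `Ỹ_z = {y ∈ Y : z ∈ X + Y + y}`. -/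
noncomputable def Ytil (X Y : Set A) (z : A) : Set A := {y ∈ Y | z ∈ X + Y + {y}}

/-- `z − W = {w : z ∈ w + W}`. -/
def subFrom (z : A) (W : Set A) : Set A := {w : A | ∃ u ∈ W, w + u = z}

end CD

open CD

namespace CD

open Set

variable {A : Type*} [AddSemigroup A]

lemma IsIdentity.add_singleton {e : A} (he : IsIdentity e) (X : Set A) : X + {e} = X := by
  simp [Set.add_singleton, fun x => (he x).1]

lemma IsUnitElem.exists_identity {u : A} (hu : IsUnitElem u) :
    ∃ e, IsIdentity e ∧ u + neg u = e ∧ neg u + u = e := by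
  rw [neg, dif_pos hu]
  exact ⟨hu.choose, hu.choose_spec.choose_spec⟩

lemma IsUnitElem.neg_add_comm [IsRightCancelAdd A] {u b : A} (hu : IsUnitElem u)
    (hb : u + b = b + u) : neg u + b = b + neg u := by
  obtain ⟨e, he, -, heu⟩ := hu.exists_identity
  apply add_right_cancel (b := u)
  rw [add_assoc, ← hb, ← add_assoc, heu, add_assoc, heu, (he b).1, (he b).2]

lemma CommOn.mono {S T : Set A} (hT : CommOn T) (hST : S ⊆ T) : CommOn S :=
  fun a ha b hb => hT a (hST ha) b (hST hb)

lemma CommOn.add_singleton {Y : Set A} (hY : CommOn Y) {v : A} (hv : ∀ y ∈ Y, v + y = y + v) :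
    CommOn (Y + {v}) := by
  have key : ∀ a ∈ Y, ∀ b ∈ Y, a + v + (b + v) = a + b + v + v := fun a _ b hb => by
    rw [add_assoc a v, ← add_assoc v, hv b hb, add_assoc, add_assoc, add_assoc]
  rintro _ ⟨a, ha, _, rfl, rfl⟩ _ ⟨b, hb, _, rfl, rfl⟩
  rw [key a ha b hb, key b hb a ha, hY a ha b hb]

lemma mem_Ytil {X Y : Set A} {z y : A} :
    y ∈ Ytil X Y z ↔ y ∈ Y ∧ ∃ w ∈ X + Y, w + y = z := by
  simp only [Ytil, Set.add_singleton, mem_image]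
  rfl

lemma encard_le_encard_add [IsLeftCancelAdd A] {X : Set A} (hX : X.Nonempty) (Y : Set A) :
    Y.encard ≤ (X + Y).encard := by
  obtain ⟨x, hx⟩ := hX
  rw [← (add_right_injective x).encard_image]
  exact encard_mono (image_subset_iff.2 fun y hy => add_mem_add hx hy)

lemma encard_add_singleton [IsRightCancelAdd A] (S : Set A) (v : A) :
    (S + {v}).encard = S.encard := by
  rw [Set.add_singleton, (add_left_injective v).encard_image]

lemma ord_le_encard_of_add_mem [IsLeftCancelAdd A] {S : Set A} {y z : A} (hz : z ∈ S)
    (hS : ∀ s ∈ S, s + y ∈ S) : ord y ≤ S.encard := by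
  have hclosed : ∀ w ∈ closure {y}, ∀ s ∈ S, s + w ∈ S := by
    intro w hw
    induction hw using closure_induction with
    | mem w hw => rwa [mem_singleton_iff.1 hw]
    | add a b _ _ ha hb => exact fun s hs => add_assoc s a b ▸ hb _ (ha s hs)
  rw [ord, ← (add_right_injective z).encard_image]
  exact encard_mono (image_subset_iff.2 fun w hw => hclosed w hw z hz)

variable [IsCancelAdd A]

lemma encard_add_diff_Ytil_add_encard_Ytil_le {X Y : Set A} (hY : CommOn Y) (z : A) :
    (X + (Y \ Ytil X Y z)).encard + (Ytil X Y z).encard ≤ (X + Y).encard := by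
  set T := Ytil X Y z
  choose! f hfXY hfz using fun y (hy : y ∈ T) => (mem_Ytil.1 hy).2
  have hf_inj : InjOn f T := fun a ha b hb hab =>
    add_left_cancel ((hfz a ha).trans (hab ▸ hfz b hb).symm)
  have hdisj : Disjoint (X + (Y \ T)) (f '' T) := by
    rw [disjoint_right]
    rintro _ ⟨y, hy, rfl⟩ ⟨x, hx, y', hy', hxy'⟩
    refine hy'.2 (mem_Ytil.2 ⟨hy'.1, x + y, add_mem_add hx (mem_Ytil.1 hy).1, ?_⟩)
    rw [add_assoc, hY y (mem_Ytil.1 hy).1 y' hy'.1, ← add_assoc, show x + y' = f y from hxy',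
      hfz y hy]
  calc _ = (X + (Y \ T)).encard + (f '' T).encard := by rw [hf_inj.encard_image]
    _ = (X + (Y \ T) ∪ f '' T).encard := (encard_union_eq hdisj).symm
    _ ≤ _ := encard_mono (union_subset (add_subset_add_left sdiff_subset) (image_subset_iff.2 hfXY))

theorem min_le_encard_add_of_identity_mem {e : A} (he : IsIdentity e) (m : ℕ∞) {X Y : Set A}
    (hX : X.Nonempty) (hYfin : Y.Finite) (heY : e ∈ Y) (hY : CommOn Y)
    (hord : ∀ y ∈ Y, y ≠ e → m ≤ ord y) :
    min m (X.encard + Y.encard - 1) ≤ (X + Y).encard := by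
  have h1 : AddLECancellable (1 : ℕ∞) := ENat.addLECancellable_of_ne_top ENat.one_ne_top
  induction hn : Y.ncard using Nat.strong_induction_on generalizing Y with
  | _ n ih =>
  by_cases hstable : ∀ y ∈ Y, ∀ w ∈ X + Y, w + y ∈ X + Y
  · by_cases hYe : ∃ y ∈ Y, y ≠ e
    · obtain ⟨y, hy, hye⟩ := hYe
      obtain ⟨w, hw⟩ := hX.add ⟨e, heY⟩
      exact (min_le_left _ _).trans
        ((hord y hy hye).trans (ord_le_encard_of_add_mem hw (hstable y hy)))
    · push Not at hYe
      obtain rfl : Y = {e} := eq_singleton_iff_unique_mem.2 ⟨heY, hYe⟩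
      rw [he.add_singleton, encard_singleton, h1.add_tsub_cancel_right]
      exact min_le_right _ _
  · push Not at hstable
    obtain ⟨y, hy, w, hw, hwy⟩ := hstable
    set T := Ytil X Y (w + y)
    have hTY : T ⊆ Y := sep_subset _ _
    have heT : e ∉ T := fun heT => by
      obtain ⟨-, w', hw', hw'e⟩ := mem_Ytil.1 heT
      exact hwy (hw'e ▸ ((he w').1.symm ▸ hw'))
    have hlt : (Y \ T).ncard < n :=
      hn ▸ ncard_lt_ncard (hTY.sdiff_ssubset_of_nonempty ⟨y, mem_Ytil.2 ⟨hy, w, hw, rfl⟩⟩) hYfin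
    have hXY' : 1 ≤ X.encard + (Y \ T).encard :=
      le_add_left (one_le_encard_iff_nonempty.2 ⟨e, heY, heT⟩)
    calc min m (X.encard + Y.encard - 1)
        = min m (X.encard + (Y \ T).encard - 1 + T.encard) := by
          rw [← encard_sdiff_add_encard_of_subset hTY, ← add_assoc, h1.tsub_add_eq_add_tsub hXY']
      _ ≤ min m (X.encard + (Y \ T).encard - 1) + T.encard :=
          (min_le_min_right _ le_self_add).trans_eq (min_add_add_right _ _ _)
      _ ≤ (X + (Y \ T)).encard + T.encard := by
          gcongr
          exact ih _ hlt hYfin.sdiff ⟨heY, heT⟩ (hY.mono sdiff_subset)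
            (fun y' hy' => hord y' hy'.1) rfl
      _ ≤ (X + Y).encard := encard_add_diff_Ytil_add_encard_Ytil_le hY _

theorem min_iInf_ord_le_encard_add {X Y : Set A} (hX : X.Nonempty) (hY : CommOn Y) {y₀ : A}
    (hy₀ : y₀ ∈ unitsIn Y) :
    min (⨅ y ∈ {y ∈ Y | y ≠ y₀}, ord (y + neg y₀)) (X.encard + Y.encard - 1) ≤
      (X + Y).encard := by
  obtain hYinf | hYfin := Y.infinite_or_finite
  · have hXY : (X + Y).encard = ⊤ := top_le_iff.1 (hYinf.encard_eq ▸ encard_le_encard_add hX Y)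
    exact hXY ▸ le_top
  obtain ⟨e, he, hy₀e, -⟩ := hy₀.2.exists_identity
  have hv : ∀ y ∈ Y, neg y₀ + y = y + neg y₀ := fun y hy => hy₀.2.neg_add_comm (hY _ hy₀.1 y hy)
  have hord : ∀ y' ∈ Y + {neg y₀}, y' ≠ e → ⨅ y ∈ {y ∈ Y | y ≠ y₀}, ord (y + neg y₀) ≤ ord y' := by
    rintro _ ⟨y, hy, _, rfl, rfl⟩ hye
    exact iInf₂_le y ⟨hy, fun hyy₀ => hye (hyy₀ ▸ hy₀e)⟩
  have hshift := min_le_encard_add_of_identity_mem he _ hX (hYfin.add (finite_singleton _))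
    ⟨y₀, hy₀.1, _, rfl, hy₀e⟩ (hY.add_singleton hv) hord
  rwa [← add_assoc, encard_add_singleton, encard_add_singleton] at hshift

end CD

theorem stmt13 {A : Type*} [AddSemigroup A] [IsCancelAdd A] (X Y : Set A)
    (hX : X.Nonempty) (hcomm : CommOn (AddSubsemigroup.closure Y : Set A)) :
    min (gamma Y) (X.encard + Y.encard - 1) ≤ (X + Y).encard := by
  rw [gamma]
  split_ifs
  · exact (min_le_left _ _).trans (encard_le_encard_add hX Y)
  · rw [iSup₂_inf_eq]
    exact iSup₂_le fun y₀ hy₀ =>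
      min_iInf_ord_le_encard_add hX (hcomm.mono subset_closure) hy₀
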